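/- arXiv:2503.14316 — 2 statements merged into one kernel-verified Lean document; each statement's English description precedes it below -/
import Mathlib

section
/- Fix n ∈ ℕ, real constants π_s, p_o, φ ≥ 0, E_h > 0, and for each i ∈ Fin n, reals R_i ≥ 0 and c_i. For a strategy profile x : Fin n → {0,1} define Σ(x) = (∑_j x_j)/E_h and the utility of player i as U_i(x) = x_i·(π_s·R_i − c_i) + (1 − x_i)·((1 − (p_o + φ·Σ(x)))·R_i − c_i). Then there exists a pure-strategy Nash equilibrium, i.e. a profile x* : Fin n → {0,1} such that for every player i and every b ∈ {0,1}, U_i(x*) ≥ U_i(Function.update x* i b). -/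
/-- Stage-2 self-reporting game: existence of a pure-strategy Nash equilibrium. -/
theorem stage2_pure_nash_equilibrium_exists
    (n : ℕ) (pis po phi Eh : ℝ) (hphi : 0 ≤ phi) (hE : 0 < Eh)
    (R c : Fin n → ℝ) (hR : ∀ i, 0 ≤ R i)
    (U : Fin n → (Fin n → Fin 2) → ℝ)
    (hU : ∀ (i : Fin n) (x : Fin n → Fin 2),
      U i x = ((x i : ℕ) : ℝ) * (pis * R i - c i)
        + (1 - ((x i : ℕ) : ℝ)) *
            ((1 - (po + phi * ((∑ j, ((x j : ℕ) : ℝ)) / Eh))) * R i - c i)) :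
    ∃ xstar : Fin n → Fin 2, ∀ (i : Fin n) (b : Fin 2),
      U i xstar ≥ U i (Function.update xstar i b) := by
  have key : ∀ (g : Fin n → Fin 2) (i : Fin n) (b : Fin 2),
      (∑ j, (((Function.update g i b j : Fin 2) : ℕ) : ℝ))
        = (((b : ℕ) : ℝ) - ((g i : ℕ) : ℝ)) + ∑ j, ((g j : ℕ) : ℝ) := by
    intro g i b
    have : (fun j => (((Function.update g i b j : Fin 2) : ℕ) : ℝ))
        = Function.update (fun j => ((g j : ℕ) : ℝ)) i ((b : ℕ) : ℝ) := by
      funext j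
      by_cases h : j = i <;> simp [Function.update, h]
    rw [this, Finset.sum_update_of_mem (Finset.mem_univ i),
      Finset.sum_sdiff_eq_sub (Finset.singleton_subset_iff.mpr (Finset.mem_univ i)),
      Finset.sum_singleton]
    ring
  by_cases hA : pis - 1 + po ≤ 0
  · refine ⟨fun _ => 0, fun i b => ?_⟩
    rw [hU, hU, key]
    have h0 : (∑ j : Fin n, ((((fun _ => (0 : Fin 2)) j : Fin 2) : ℕ) : ℝ)) = 0 := by simp
    rw [h0]
    fin_cases b <;> simp <;> nlinarith [hR i]
  · refine ⟨fun _ => 1, fun i b => ?_⟩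
    push_neg at hA
    rw [hU, hU, key]
    have h1 : (∑ j : Fin n, ((((fun _ => (1 : Fin 2)) j : Fin 2) : ℕ) : ℝ)) = n := by simp
    rw [h1]
    have hn : (1 : ℝ) ≤ (n : ℝ) := by
      exact_mod_cast Nat.one_le_iff_ne_zero.mpr (by rintro rfl; exact absurd i.2 (by simp))
    have hpn : 0 ≤ phi * ((-1 + (n : ℝ)) / Eh) :=
      mul_nonneg hphi (div_nonneg (by linarith) hE.le)
    have h2 : 0 ≤ R i * (pis - 1 + po + phi * ((-1 + (n : ℝ)) / Eh)) :=
      mul_nonneg (hR i) (by linarith)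
    fin_cases b <;> simp <;> nlinarith [hR i, h2]
end

section
/- Let J ≥ 1, α : Fin J → ℝ, cost functions C_j : ℝ → ℝ, and let r* : Fin J → ℝ be defined by r*_J = C_J(α_J) and r*_j = r*_{j+1} + C_j(α_j) − C_j(α_{j+1}) for j < J. If r : Fin J → ℝ satisfies the type-J individual rationality constraint r_J ≥ C_J(α_J) and the adjacent downward incentive-compatibility constraints r_j − C_j(α_j) ≥ r_{j+1} − C_j(α_{j+1}) for all j < J, then r_j ≥ r*_j for every j; consequently ∑_{j=1}^{J} r_j ≥ ∑_{j=1}^{J} r*_j. -/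
/-- Any reward schedule satisfying the type-J IR constraint and the adjacent
downward IC constraints dominates the optimal rewards pointwise, hence in total. -/
theorem optimal_rewards_lower_bound
    (J : ℕ) (hJ : 1 ≤ J) (α : Fin J → ℝ) (C : Fin J → ℝ → ℝ)
    (rstar : Fin J → ℝ)
    (hlast : rstar ⟨J - 1, by omega⟩ = C ⟨J - 1, by omega⟩ (α ⟨J - 1, by omega⟩))
    (hrec : ∀ (j : ℕ) (h : j + 1 < J),
      rstar ⟨j, Nat.lt_of_succ_lt h⟩ =
        rstar ⟨j + 1, h⟩
          + C ⟨j, Nat.lt_of_succ_lt h⟩ (α ⟨j, Nat.lt_of_succ_lt h⟩)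
          - C ⟨j, Nat.lt_of_succ_lt h⟩ (α ⟨j + 1, h⟩))
    (r : Fin J → ℝ)
    (hIRJ : r ⟨J - 1, by omega⟩ ≥ C ⟨J - 1, by omega⟩ (α ⟨J - 1, by omega⟩))
    (hIC : ∀ (j : ℕ) (h : j + 1 < J),
      r ⟨j, Nat.lt_of_succ_lt h⟩
          - C ⟨j, Nat.lt_of_succ_lt h⟩ (α ⟨j, Nat.lt_of_succ_lt h⟩) ≥
        r ⟨j + 1, h⟩ - C ⟨j, Nat.lt_of_succ_lt h⟩ (α ⟨j + 1, h⟩)) :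
    (∀ j : Fin J, r j ≥ rstar j) ∧ ∑ j, r j ≥ ∑ j, rstar j := by
  have key : ∀ m : ℕ, ∀ j : ℕ, ∀ hj : j + m + 1 = J,
      r ⟨j, by omega⟩ ≥ rstar ⟨j, by omega⟩ := by
    intro m
    induction m with
    | zero =>
      intro j hj
      have hjeq : j = J - 1 := by omega
      subst hjeq
      rw [hlast]; exact hIRJ
    | succ m ih =>
      intro j hj
      have h1 : j + 1 < J := by omega
      have h2 : r ⟨j + 1, h1⟩ ≥ rstar ⟨j + 1, h1⟩ := ih (j + 1) (by omega)
      have h3 := hIC j h1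
      have h4 := hrec j h1
      have : (⟨j, by omega⟩ : Fin J) = ⟨j, Nat.lt_of_succ_lt h1⟩ := rfl
      rw [this, h4]
      linarith
  have pt : ∀ j : Fin J, r j ≥ rstar j := by
    intro ⟨j, hjJ⟩
    exact key (J - 1 - j) j (by omega)
  exact ⟨pt, Finset.sum_le_sum fun j _ => pt j⟩
end
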